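/- For the Berwald–Moór metric of momenta the following hold for p in the positive orthant: a^i = K/(n·p_i) for every i; a^{ij} = (n/(n−1))·a^i a^j for i ≠ j and a^{ii} = 0; and the matrix (a_{ij}) defined by a_{ij} = n·a_i a_j for i ≠ j and a_{ii} = −n(n−2)·a_i² is the inverse of the matrix (a^{ij}), i.e. ∑_s a_{is}·a^{sj} = δ_i^j for all i, j. -/

import Mathlib

open Finset

noncomputable section

/-- The Berwald–Moór coefficients: `a^{i₁…i_n} = 1/n!` if the indices are pairwise
distinct and `0` otherwise, with `n = N + 4`. -/
def BMc (N : ℕ) : (Fin (N + 4) → Fin (N + 4)) → ℝ :=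
  fun ι => if Function.Injective ι then ((N + 4).factorial : ℝ)⁻¹ else 0

/-- `A(p) = ∑ a^{i₁…i_n} p_{i₁}⋯p_{i_n}`. -/
def Afun (N : ℕ) (p : Fin (N + 4) → ℝ) : ℝ :=
  ∑ ι : Fin (N + 4) → Fin (N + 4), BMc N ι * ∏ t, p (ι t)

/-- `K(p) = A(p)^{1/n}`, the Berwald–Moór metric of momenta. -/
def Kfun (N : ℕ) (p : Fin (N + 4) → ℝ) : ℝ :=
  Afun N p ^ ((1 : ℝ) / (N + 4))

/-- `a^i = (∑ a^{i i₂…i_n} p_{i₂}⋯p_{i_n}) / K^{n-1}`. -/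
def aU1 (N : ℕ) (i : Fin (N + 4)) (p : Fin (N + 4) → ℝ) : ℝ :=
  (∑ ι : Fin (N + 3) → Fin (N + 4), BMc N (Fin.cons i ι) * ∏ t, p (ι t)) / Kfun N p ^ (N + 3)

/-- `a^{ij} = (∑ a^{i j i₃…i_n} p_{i₃}⋯p_{i_n}) / K^{n-2}`. -/
def aU2 (N : ℕ) (i j : Fin (N + 4)) (p : Fin (N + 4) → ℝ) : ℝ :=
  (∑ ι : Fin (N + 2) → Fin (N + 4), BMc N (Fin.cons i (Fin.cons j ι)) * ∏ t, p (ι t)) /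
    Kfun N p ^ (N + 2)

/-- `a^{ijk} = (∑ a^{i j k i₄…i_n} p_{i₄}⋯p_{i_n}) / K^{n-3}`. -/
def aU3 (N : ℕ) (i j k : Fin (N + 4)) (p : Fin (N + 4) → ℝ) : ℝ :=
  (∑ ι : Fin (N + 1) → Fin (N + 4), BMc N (Fin.cons i (Fin.cons j (Fin.cons k ι))) *
    ∏ t, p (ι t)) / Kfun N p ^ (N + 1)

/-- The matrix `a_{ij}`: `a_{ij} = n a_i a_j` for `i ≠ j` and `a_{ii} = -n(n-2) a_i²`,
where `a_i = p_i/K`. -/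
def aLowBM (N : ℕ) (p : Fin (N + 4) → ℝ) (i j : Fin (N + 4)) : ℝ :=
  if i = j then -((N + 4 : ℝ) * (N + 2)) * (p i / Kfun N p) ^ 2
  else (N + 4 : ℝ) * (p i / Kfun N p) * (p j / Kfun N p)

/-- `g_{ij} = (1/(n-1)) a_{ij} + ((n-2)/(n-1)) a_i a_j`. -/
def gLowBM (N : ℕ) (p : Fin (N + 4) → ℝ) (i j : Fin (N + 4)) : ℝ :=
  (1 / (N + 3 : ℝ)) * aLowBM N p i j +
    ((N + 2 : ℝ) / (N + 3)) * (p i / Kfun N p) * (p j / Kfun N p)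

/-- Partial derivative `∂f/∂p_k` of a function of `p`. -/
def pd {n : ℕ} (f : (Fin n → ℝ) → ℝ) (k : Fin n) (p : Fin n → ℝ) : ℝ :=
  deriv (fun t => f (Function.update p k t)) (p k)

/-- Fundamental metrical d-tensor `g^{ij} = (1/2) ∂²(K²)/∂p_i∂p_j`. -/
def gU (N : ℕ) (i j : Fin (N + 4)) (p : Fin (N + 4) → ℝ) : ℝ :=
  (1 / 2 : ℝ) * pd (fun q => pd (fun r => Kfun N r ^ 2) j q) i p

/-- Angular metrical d-tensor `h^{ij} = K ∂²K/∂p_i∂p_j`. -/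
def hU (N : ℕ) (i j : Fin (N + 4)) (p : Fin (N + 4) → ℝ) : ℝ :=
  Kfun N p * pd (fun q => pd (Kfun N) j q) i p

/-- v-torsion d-tensor `C^{ijk} = -(1/2) ∂g^{ij}/∂p_k`. -/
def CU (N : ℕ) (i j k : Fin (N + 4)) (p : Fin (N + 4) → ℝ) : ℝ :=
  -(1 / 2 : ℝ) * pd (gU N i j) k p

/-- v-derivation components `C_i^{jk} = ∑_s g_{is} C^{sjk}`. -/
def CL (N : ℕ) (p : Fin (N + 4) → ℝ) (i j k : Fin (N + 4)) : ℝ :=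
  ∑ s, gLowBM N p i s * CU N s j k p

/-!
Only injective index tuples contribute, and for a set `s` of `n - m` coordinates the injective
`m`-tuples avoiding `s` run over the `m!` orderings of the remaining coordinates, each with the
same monomial. Hence `A(p) = p₁⋯p_n`, `a^i = K/(n p_i)` and, for `i ≠ j`,
`a^{ij} = 1/(n(n-1) a_i a_j)`, while `a^{ii} = 0`. The inverse statement is then an identity
for rank-one perturbations of diagonal matrices: with `b_i = 1/a_i`,
`a_{ij} = n (a_i a_j - (n-1) δ_{ij} a_i²)`, `a^{ij} = (b_i b_j - δ_{ij} b_i²)/(n(n-1))`,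
and `∑ₛ a_s b_s = n`.
-/

open Function

section
variable {α R : Type*} [DecidableEq α]

theorem cons_injective_and_notMem_iff {m : ℕ} (i : α) (ι : Fin m → α) (s : Finset α) :
    (Injective (Fin.cons i ι : Fin (m + 1) → α) ∧ ∀ k, (Fin.cons i ι : Fin (m + 1) → α) k ∉ s) ↔
      i ∉ s ∧ Injective ι ∧ ∀ k, ι k ∉ insert i s := by
  simp only [Fin.cons_injective_iff, Fin.forall_fin_succ, Fin.cons_zero, Fin.cons_succ,
    Set.mem_range, mem_insert, not_exists, not_or]
  grind

theorem sum_ite_cons_injective [Fintype α] [AddCommMonoid R] {m : ℕ} (i : α) (s : Finset α)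
    (g : (Fin m → α) → R) :
    ∑ ι : Fin m → α, (if Injective (Fin.cons i ι : Fin (m + 1) → α) ∧
        ∀ k, (Fin.cons i ι : Fin (m + 1) → α) k ∉ s then g ι else 0) =
      if i ∈ s then 0 else
        ∑ ι : Fin m → α, if Injective ι ∧ ∀ k, ι k ∉ insert i s then g ι else 0 := by
  simp only [cons_injective_and_notMem_iff]
  split_ifs with hi <;> simp [hi]

theorem sum_ite_injective_notMem [Fintype α] [CommSemiring R] (p : α → R) :
    ∀ (m : ℕ) (s : Finset α), sᶜ.card = m →
      ∑ ι : Fin m → α, (if Injective ι ∧ ∀ k, ι k ∉ s then ∏ k, p (ι k) else 0) =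
        m.factorial * ∏ x ∈ sᶜ, p x
  | 0, s, hs => by
    rw [card_eq_zero.mp hs]
    simp [injective_of_subsingleton]
  | m + 1, s, hs => by
    have hterm : ∀ x, (∑ ι : Fin m → α, if Injective (Fin.cons x ι : Fin (m + 1) → α) ∧
        ∀ k, (Fin.cons x ι : Fin (m + 1) → α) k ∉ s then
          ∏ k, p ((Fin.cons x ι : Fin (m + 1) → α) k) else 0) =
        if x ∈ sᶜ then m.factorial * ∏ y ∈ sᶜ, p y else 0 := fun x => by
      simp only [Fin.prod_univ_succ, Fin.cons_zero, Fin.cons_succ, sum_ite_cons_injective,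
        mem_compl]
      split_ifs with hx
      · rfl
      · have hcard : (insert x s)ᶜ.card = m := by
          rw [compl_insert, card_erase_of_mem (mem_compl.mpr hx), hs, Nat.add_sub_cancel]
        simp only [← mul_ite_zero, ← mul_sum, sum_ite_injective_notMem p m _ hcard]
        rw [compl_insert, mul_left_comm, mul_prod_erase _ _ (mem_compl.mpr hx)]
    rw [← (Fin.consEquiv fun _ => α).sum_comp, Fintype.sum_prod_type]
    refine (sum_congr rfl fun x _ => hterm x).trans ?_
    simp only [sum_ite_mem, univ_inter, sum_const, hs, nsmul_eq_mul, Nat.factorial_succ]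
    push_cast
    ring

end

namespace BerwaldMoor

variable {ι K : Type*} [Fintype ι] [DecidableEq ι] [Field K]

-- With `u i = a_i = p_i / K` these are the matrices `(a_{ij})` and `(a^{ij})`.

def lowerMatrix (u : ι → K) : Matrix ι ι K :=
  let n : K := Fintype.card ι
  Matrix.of fun i j => if i = j then -(n * (n - 2)) * u i ^ 2 else n * u i * u j

def upperMatrix (u : ι → K) : Matrix ι ι K :=
  let n : K := Fintype.card ι
  Matrix.of fun i j => if i = j then 0 else (n * (n - 1) * (u i * u j))⁻¹

theorem lowerMatrix_mul_upperMatrix (u : ι → K) (hu : ∀ i, u i ≠ 0)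
    (hn : (Fintype.card ι : K) ≠ 0) (hn1 : (Fintype.card ι : K) - 1 ≠ 0) :
    lowerMatrix u * upperMatrix u = 1 := by
  set n : K := (Fintype.card ι : K) with hn_def
  ext i j
  set c := u i / u j
  -- `u s` cancels from every term, leaving `c` times indicators of `s = i` and `s = j`.
  have hterm : ∀ s, lowerMatrix u i s * upperMatrix u s j =
      (c - (if s = j then c else 0) - (if s = i then (n - 1) * c else 0) +
        (if s = i then (if s = j then n - 1 else 0) else 0)) / (n - 1) := fun s => by
    simp only [lowerMatrix, upperMatrix, Matrix.of_apply, ← hn_def]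
    have := hu i; have := hu j; have := hu s
    split_ifs <;> subst_vars <;> simp only [c, not_true_eq_false] at * <;> field_simp <;> ring
  rw [Matrix.mul_apply, Matrix.one_apply, sum_congr rfl fun s _ => hterm s, ← sum_div]
  simp only [sum_add_distrib, sum_sub_distrib, sum_ite_eq', mem_univ, if_true, sum_const,
    card_univ, nsmul_eq_mul]
  split_ifs <;> field_simp <;> ring
end BerwaldMoor

section
variable (N : ℕ) (p : Fin (N + 4) → ℝ)

-- The vacuous condition `∉ ∅` lets `sum_ite_injective_notMem` apply with `s = ∅`.
theorem BMc_mul_eq_ite (ι : Fin (N + 4) → Fin (N + 4)) (x : ℝ) :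
    BMc N ι * x = ((N + 4).factorial : ℝ)⁻¹ *
      if Injective ι ∧ ∀ k, ι k ∉ (∅ : Finset (Fin (N + 4))) then x else 0 := by
  simp [BMc]

theorem Afun_eq_prod : Afun N p = ∏ x, p x := by
  simp only [Afun, BMc_mul_eq_ite, ← mul_sum]
  rw [sum_ite_injective_notMem p _ ∅ (by simp), compl_empty, ← mul_assoc,
    inv_mul_cancel₀ (by positivity), one_mul]

theorem BMc_cons_mul_eq_ite (i : Fin (N + 4)) (ι : Fin (N + 3) → Fin (N + 4)) (x : ℝ) :
    BMc N (Fin.cons i ι) * x = ((N + 4).factorial : ℝ)⁻¹ *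
      if Injective ι ∧ ∀ k, ι k ∉ ({i} : Finset (Fin (N + 4))) then x else 0 := by
  rw [BMc_mul_eq_ite]
  congr 1
  exact if_congr (by rw [cons_injective_and_notMem_iff]; simp) rfl rfl

theorem BMc_cons_cons_mul_eq_ite (i j : Fin (N + 4)) (ι : Fin (N + 2) → Fin (N + 4)) (x : ℝ) :
    BMc N (Fin.cons i (Fin.cons j ι)) * x = ((N + 4).factorial : ℝ)⁻¹ *
      if j ≠ i ∧ Injective ι ∧ ∀ k, ι k ∉ ({j, i} : Finset (Fin (N + 4))) then x else 0 := by
  rw [BMc_mul_eq_ite]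
  congr 1
  exact if_congr
    (by rw [cons_injective_and_notMem_iff, cons_injective_and_notMem_iff]; simp) rfl rfl

theorem sum_BMc_cons_mul_prod (i : Fin (N + 4)) :
    ∑ ι : Fin (N + 3) → Fin (N + 4), BMc N (Fin.cons i ι) * ∏ t, p (ι t) =
      ((N : ℝ) + 4)⁻¹ * ∏ x ∈ {i}ᶜ, p x := by
  simp only [BMc_cons_mul_eq_ite, ← mul_sum]
  rw [sum_ite_injective_notMem p _ {i} (by simp [card_compl]), ← mul_assoc]
  congr 1
  rw [show N + 4 = (N + 3) + 1 from rfl, Nat.factorial_succ]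
  push_cast
  field_simp
  ring

theorem sum_BMc_cons_cons_mul_prod (i j : Fin (N + 4)) :
    ∑ ι : Fin (N + 2) → Fin (N + 4), BMc N (Fin.cons i (Fin.cons j ι)) * ∏ t, p (ι t) =
      if j = i then 0 else (((N : ℝ) + 4) * (N + 3))⁻¹ * ∏ x ∈ {j, i}ᶜ, p x := by
  simp only [BMc_cons_cons_mul_eq_ite, ← mul_sum]
  split_ifs with hji
  · simp [hji]
  · simp only [hji, ne_eq, not_false_eq_true, true_and]
    rw [sum_ite_injective_notMem p _ {j, i} (by rw [card_compl, card_pair hji]; simp),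
      ← mul_assoc]
    congr 1
    rw [show N + 4 = (N + 2) + 1 + 1 from rfl, Nat.factorial_succ, Nat.factorial_succ]
    push_cast
    field_simp
    ring

theorem Kfun_pow (hp : ∀ i, 0 ≤ p i) : Kfun N p ^ (N + 4) = ∏ x, p x := by
  rw [Kfun, Afun_eq_prod, one_div, show ((N : ℝ) + 4) = ((N + 4 : ℕ) : ℝ) by push_cast; rfl,
    Real.rpow_inv_natCast_pow (prod_nonneg fun x _ => hp x) (by omega)]

theorem Kfun_pos (hp : ∀ i, 0 < p i) : 0 < Kfun N p := by
  rw [Kfun, Afun_eq_prod]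
  exact Real.rpow_pos_of_pos (prod_pos fun x _ => hp x) _

theorem aU1_eq (hp : ∀ i, 0 < p i) (i : Fin (N + 4)) :
    aU1 N i p = Kfun N p / ((N + 4 : ℝ) * p i) := by
  have hK := Kfun_pos N p hp
  have := (hp i).ne'
  have hKpow : p i * ∏ x ∈ {i}ᶜ, p x = Kfun N p ^ (N + 4) := by
    rw [← prod_singleton p i, prod_mul_prod_compl, Kfun_pow N p fun x => (hp x).le]
  rw [aU1, sum_BMc_cons_mul_prod]
  field_simp
  linear_combination hKpow

theorem aU2_self (i : Fin (N + 4)) : aU2 N i i p = 0 := by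
  rw [aU2, sum_BMc_cons_cons_mul_prod, if_pos rfl, zero_div]

theorem aU2_of_ne (hp : ∀ i, 0 < p i) {i j : Fin (N + 4)} (hij : i ≠ j) :
    aU2 N i j p = Kfun N p ^ 2 / ((N + 4 : ℝ) * (N + 3) * (p i * p j)) := by
  have hK := Kfun_pos N p hp
  have := (hp i).ne'
  have := (hp j).ne'
  have hKpow : p j * p i * ∏ x ∈ {j, i}ᶜ, p x = Kfun N p ^ (N + 4) := by
    rw [← prod_pair hij.symm, prod_mul_prod_compl, Kfun_pow N p fun x => (hp x).le]
  rw [aU2, sum_BMc_cons_cons_mul_prod, if_neg hij.symm]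
  field_simp
  linear_combination hKpow

theorem aU2_eq_upperMatrix (hp : ∀ i, 0 < p i) (i j : Fin (N + 4)) :
    aU2 N i j p = BerwaldMoor.upperMatrix (fun k => p k / Kfun N p) i j := by
  simp only [BerwaldMoor.upperMatrix, Matrix.of_apply, Fintype.card_fin]
  split_ifs with hij
  · rw [hij, aU2_self]
  · have := (hp i).ne'
    have := (hp j).ne'
    rw [aU2_of_ne N p hp hij]
    push_cast
    rw [show (N : ℝ) + 4 - 1 = N + 3 by ring]
    field_simp

theorem aLowBM_eq : aLowBM N p = BerwaldMoor.lowerMatrix (fun k => p k / Kfun N p) := by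
  ext i j
  simp only [aLowBM, BerwaldMoor.lowerMatrix, Matrix.of_apply, Fintype.card_fin]
  push_cast
  split_ifs <;> ring

end

/-- for the Berwald–Moór metric of momenta (`n = N + 4`) and `p` in the
positive orthant: `a^i = K/(n p_i)`, `a^{ij} = (n/(n-1)) a^i a^j` for `i ≠ j`,
`a^{ii} = 0`, and the matrix `(a_{ij})` is the inverse of `(a^{ij})`. -/
theorem stmt_16 (N : ℕ) (p : Fin (N + 4) → ℝ) (hp : ∀ i, 0 < p i) :
    (∀ i, aU1 N i p = Kfun N p / ((N + 4 : ℝ) * p i)) ∧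
    (∀ i j, i ≠ j → aU2 N i j p = ((N + 4 : ℝ) / (N + 3)) * (aU1 N i p * aU1 N j p)) ∧
    (∀ i, aU2 N i i p = 0) ∧
    (∀ i j, ∑ s, aLowBM N p i s * aU2 N s j p = if i = j then (1 : ℝ) else 0) := by
  refine ⟨aU1_eq N p hp, fun i j hij => ?_, aU2_self N p, fun i j => ?_⟩
  · have := (hp i).ne'
    have := (hp j).ne'
    rw [aU2_of_ne N p hp hij, aU1_eq N p hp, aU1_eq N p hp]
    field_simp
  · have hK := Kfun_pos N p hp
    have hn : (Fintype.card (Fin (N + 4)) : ℝ) = N + 4 := by simp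
    have hinv := BerwaldMoor.lowerMatrix_mul_upperMatrix (fun k => p k / Kfun N p)
      (fun k => (div_pos (hp k) hK).ne') (by rw [hn]; positivity) (by rw [hn]; ring_nf; positivity)
    simpa only [Matrix.mul_apply, Matrix.one_apply, aLowBM_eq, aU2_eq_upperMatrix N p hp] using
      congr_fun₂ hinv i j

end
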